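/- arXiv:1812.05147 — 3 statements merged into one kernel-verified Lean document; each statement's English description precedes it below -/
import Mathlib

section
/- If m = λn²/(k(n-1)+1) (with k ≥ 2, n ≥ 2, λ ≥ 1 positive integers), then the quantity k(λn − m)/(λn² − m) equals (k−1)/n. Consequently, if an optimal OA_λ(k,n) exists then n divides k−1. -/
/-- An orthogonal array `OA_λ(k,n)` of strength 2. -/
def IsOA (lam k n : ℕ) (A : Fin (lam * n ^ 2) → Fin k → Fin n) : Prop :=
  ∀ c₁ c₂ : Fin k, c₁ ≠ c₂ → ∀ x y : Fin n,
    (Finset.univ.filter (fun i => A i c₁ = x ∧ A i c₂ = y)).card = lam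

/-!
Let `r i` count the symbol `0` in row `i`. Double counting over one column and over ordered pairs
of columns gives `∑ r i = k λ n` and `∑ r i ^ 2 = k λ n + k (k - 1) λ`, hence
`∑ (n r i - (k - 1)) ^ 2 = λ n² (k (n - 1) + 1)` over all `λ n²` rows. The `m` constant rows
`0 ⋯ 0` have `r i = k` and already contribute `m (k (n - 1) + 1) ^ 2 = λ n² (k (n - 1) + 1)`, so
every other row satisfies `n r i = k - 1`; there is such a row because `m < λ n²`.
-/

open Finset Fintype

theorem mul_sub_div_sub_eq_sub_one_div {K : Type*} [Field K] {k n lam m : K} (hn : n ≠ 0)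
    (hden : m * k * (n - 1) ≠ 0) (heq : m * (k * (n - 1) + 1) = lam * n ^ 2) :
    k * (lam * n - m) / (lam * n ^ 2 - m) = (k - 1) / n := by
  have hden' : lam * n ^ 2 - m = m * k * (n - 1) := by linear_combination -heq
  rw [div_eq_div_iff (hden' ▸ hden) hn]
  linear_combination -heq

def IsPairBalanced {ι κ α : Type*} [Fintype ι] [DecidableEq α] (lam : ℕ) (A : ι → κ → α) :
    Prop :=
  ∀ c₁ c₂ : κ, c₁ ≠ c₂ → ∀ x y : α, #{i | A i c₁ = x ∧ A i c₂ = y} = lam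

theorem isOA_iff_isPairBalanced {lam k n : ℕ} {A : Fin (lam * n ^ 2) → Fin k → Fin n} :
    IsOA lam k n A ↔ IsPairBalanced lam A :=
  Iff.rfl

section RowCount

variable {ι κ α : Type*} [Fintype κ] [DecidableEq α]

def rowCount (A : ι → κ → α) (x : α) (i : ι) : ℕ :=
  #{c | A i c = x}

theorem sum_rowCount_eq_sum_card [Fintype ι] (A : ι → κ → α) (x : α) :
    ∑ i, rowCount A x i = ∑ c, #{i | A i c = x} :=
  sum_card_bipartiteAbove_eq_sum_card_bipartiteBelow _

theorem rowCount_sq (A : ι → κ → α) (x : α) (i : ι) :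
    rowCount A x i ^ 2 = #{p : κ × κ | A i p.1 = x ∧ A i p.2 = x} := by
  rw [sq, rowCount, ← card_product, ← filter_product, univ_product_univ]

theorem sum_rowCount_sq_eq_sum_card [Fintype ι] (A : ι → κ → α) (x : α) :
    ∑ i, rowCount A x i ^ 2 = ∑ c₁, ∑ c₂, #{i | A i c₁ = x ∧ A i c₂ = x} := by
  simp_rw [rowCount_sq]
  exact (sum_card_bipartiteAbove_eq_sum_card_bipartiteBelow _).trans (Fintype.sum_prod_type _)

theorem rowCount_of_eq_const {A : ι → κ → α} {x : α} {i : ι} (hi : A i = fun _ => x) :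
    rowCount A x i = card κ := by
  simp [rowCount, hi]

end RowCount

namespace IsPairBalanced

variable {ι κ α : Type*} [Fintype ι] [Fintype α] [DecidableEq α] [Nontrivial κ]
  {lam : ℕ} {A : ι → κ → α}

theorem card_filter_eq (hA : IsPairBalanced lam A) (c : κ) (x : α) :
    #{i | A i c = x} = lam * card α := by
  obtain ⟨c', hc'⟩ := exists_ne c
  rw [card_eq_sum_card_fiberwise (f := (A · c')) (t := univ) (fun _ _ => mem_coe.2 (mem_univ _))]
  simp_rw [filter_filter, hA c c' hc'.symm, sum_const, card_univ, smul_eq_mul, mul_comm]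

theorem card_eq (hA : IsPairBalanced lam A) : card ι = lam * card α ^ 2 := by
  obtain ⟨c⟩ := (inferInstance : Nonempty κ)
  rw [← card_univ, card_eq_sum_card_fiberwise (f := (A · c)) (t := univ)
    (fun _ _ => mem_coe.2 (mem_univ _))]
  simp_rw [hA.card_filter_eq, sum_const, card_univ, smul_eq_mul]
  ring

theorem sum_rowCount [Fintype κ] (hA : IsPairBalanced lam A) (x : α) :
    ∑ i, rowCount A x i = card κ * (lam * card α) := by
  simp_rw [sum_rowCount_eq_sum_card, hA.card_filter_eq, sum_const, card_univ, smul_eq_mul]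

theorem sum_rowCount_sq [Fintype κ] (hA : IsPairBalanced lam A) (x : α) :
    ∑ i, rowCount A x i ^ 2 = card κ * (lam * card α) + card κ * (card κ - 1) * lam := by
  classical
  have hrow (c₁ : κ) :
      ∑ c₂, #{i | A i c₁ = x ∧ A i c₂ = x} = lam * card α + (card κ - 1) * lam := by
    rw [← add_sum_erase _ _ (mem_univ c₁), sum_congr rfl fun c₂ hc₂ =>
      hA c₁ c₂ (ne_of_mem_erase hc₂).symm x x]
    simp only [and_self, hA.card_filter_eq, sum_const, card_erase_of_mem (mem_univ _), card_univ,
      smul_eq_mul]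
  simp_rw [sum_rowCount_sq_eq_sum_card, hrow, sum_const, card_univ, smul_eq_mul]
  ring

theorem sum_sq_card_mul_rowCount_sub [Fintype κ] (hA : IsPairBalanced lam A) (x : α) :
    ∑ i, ((card α : ℤ) * rowCount A x i - (card κ - 1)) ^ 2 =
      (lam : ℤ) * card α ^ 2 * ((card κ : ℤ) * (card α - 1) + 1) := by
  have h1 : ∑ i, (rowCount A x i : ℤ) = card κ * (lam * card α) := by
    exact_mod_cast hA.sum_rowCount x
  have h2 : ∑ i, (rowCount A x i : ℤ) ^ 2 =
      card κ * (lam * card α) + card κ * (card κ - 1) * lam := by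
    have := congrArg (Nat.cast : ℕ → ℤ) (hA.sum_rowCount_sq x)
    push_cast [Nat.cast_sub (card_pos : 0 < card κ)] at this
    exact this
  have hι : (card ι : ℤ) = lam * card α ^ 2 := by exact_mod_cast hA.card_eq
  simp only [sub_sq, mul_pow, sum_add_distrib, sum_sub_distrib, ← mul_sum, ← sum_mul, sum_const,
    card_univ, nsmul_eq_mul, h1, h2, hι]
  ring

theorem card_mul_rowCount_eq_of_ne_const [Fintype κ] (hA : IsPairBalanced lam A) {x : α}
    (heq : #{i | A i = fun _ => x} * (card κ * (card α - 1) + 1) = lam * card α ^ 2)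
    {i : ι} (hi : A i ≠ fun _ => x) :
    (card α : ℤ) * rowCount A x i = card κ - 1 := by
  set f : ι → ℤ := fun j => ((card α : ℤ) * rowCount A x j - (card κ - 1)) ^ 2
  have heqZ : (#{i | A i = fun _ => x} : ℤ) * (card κ * (card α - 1) + 1) = lam * card α ^ 2 := by
    have := congrArg (Nat.cast : ℕ → ℤ) heq
    push_cast [Nat.cast_sub (card_pos_iff.2 ⟨x⟩ : 0 < card α)] at this
    exact this
  have hconst :
      ∑ j with A j = (fun _ => x), f j = lam * card α ^ 2 * (card κ * (card α - 1) + 1) := by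
    rw [Finset.sum_congr rfl fun j hj => show f j = (card α * card κ - (card κ - 1)) ^ 2 by
      simp only [f, rowCount_of_eq_const (mem_filter.1 hj).2], sum_const, nsmul_eq_mul]
    linear_combination ((card κ : ℤ) * (card α - 1) + 1) * heqZ
  have hrest : ∑ j with A j ≠ (fun _ => x), f j = 0 := by
    have := sum_filter_add_sum_filter_not univ (fun j => A j = fun _ => x) f
    rw [hA.sum_sq_card_mul_rowCount_sub, hconst] at this
    linarith
  have hfi : f i = 0 := (Finset.sum_eq_zero_iff_of_nonneg fun j _ => sq_nonneg _).1 hrest i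
    (mem_filter.2 ⟨mem_univ _, hi⟩)
  linarith [pow_eq_zero_iff two_ne_zero |>.1 hfi]

end IsPairBalanced

theorem stmt2_general (k n lam m : ℕ) [NeZero n] (hk : 2 ≤ k) (hn : 2 ≤ n)
    (hm : 1 ≤ m)
    (heq : m * (k * (n - 1) + 1) = lam * n ^ 2) :
    (k : ℚ) * ((lam : ℚ) * n - m) / ((lam : ℚ) * n ^ 2 - m) = ((k : ℚ) - 1) / n ∧
    ((∃ A : Fin (lam * n ^ 2) → Fin k → Fin n, IsOA lam k n A ∧
        (Finset.univ.filter (fun i => A i = fun _ => (0 : Fin n))).card = m) →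
      n ∣ k - 1) := by
  refine ⟨?_, ?_⟩
  · have heqQ : (m : ℚ) * (k * (n - 1) + 1) = lam * n ^ 2 := by
      have := congrArg (Nat.cast : ℕ → ℚ) heq
      push_cast [Nat.cast_sub (by omega : 1 ≤ n)] at this
      exact this
    have hk' : (0 : ℚ) < k := by exact_mod_cast (by omega : 0 < k)
    have hn' : (1 : ℚ) < n := by exact_mod_cast hn
    have hm' : (0 : ℚ) < m := by exact_mod_cast hm
    exact mul_sub_div_sub_eq_sub_one_div (by positivity)
      (mul_pos (mul_pos hm' hk') (sub_pos.2 hn')).ne' heqQ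
  · rintro ⟨A, hA, hcard⟩
    have : Nontrivial (Fin k) := Fin.nontrivial_iff_two_le.2 hk
    obtain ⟨i, hi⟩ : ∃ i, A i ≠ fun _ => 0 := by
      by_contra! hall
      have hm_eq : m = lam * n ^ 2 := by simpa [hall] using hcard.symm
      have : 0 < k * (n - 1) := Nat.mul_pos (by omega) (by omega)
      nlinarith
    have hrow := (isOA_iff_isPairBalanced.1 hA).card_mul_rowCount_eq_of_ne_const
      (by simpa [hcard] using heq) hi
    simp only [Fintype.card_fin] at hrow
    exact Int.natCast_dvd_natCast.1 ⟨_, by rw [Nat.cast_sub (by omega : 1 ≤ k)]; exact hrow.symm⟩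

theorem stmt2 (k n lam m : ℕ) [NeZero n] (hk : 2 ≤ k) (hn : 2 ≤ n)
    (hlam : 1 ≤ lam) (hm : 1 ≤ m)
    (heq : m * (k * (n - 1) + 1) = lam * n ^ 2) :
    (k : ℚ) * ((lam : ℚ) * n - m) / ((lam : ℚ) * n ^ 2 - m) = ((k : ℚ) - 1) / n ∧
    ((∃ A : Fin (lam * n ^ 2) → Fin k → Fin n, IsOA lam k n A ∧
        (Finset.univ.filter (fun i => A i = fun _ => (0 : Fin n))).card = m) →
      n ∣ k - 1) :=
  stmt2_general k n lam m hk hn hm heq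
end

section
/- If (m, λ, k, 2) is a basic quadruple with m > 1, then m = 2, and there exists a positive integer t such that λ = 2t+1 and k = 4t+1. -/
/-!
Coprimality of `m` and `λ` in `m (k(n-1)+1) = λ n²` forces `m ∣ n²`. For `n = 2` write
`k = 2s + 1`; the equation becomes `m (s+1) = 2λ`, and `m ∈ {2, 4}` is even, so `λ` is odd.
Then `m = 4` would make `λ = 2(s+1)` even, while `m = 2` gives `λ = s + 1`, so `s = 2t`.
-/

/-- A quadruple of positive integers `(m, λ, k, n)` is feasible if `k ≥ 2`, `n ≥ 2`,
`m = λ n² / (k(n-1)+1)`, and `(k-1)/n` is a positive integer. -/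
def Feasible (m lam k n : ℕ) : Prop :=
  0 < m ∧ 0 < lam ∧ 2 ≤ k ∧ 2 ≤ n ∧
    m * (k * (n - 1) + 1) = lam * n ^ 2 ∧ n ∣ k - 1 ∧ 1 ≤ (k - 1) / n

/-- A feasible quadruple is basic if moreover `gcd(m, λ) = 1`. -/
def Basic (m lam k n : ℕ) : Prop :=
  Feasible m lam k n ∧ Nat.gcd m lam = 1

namespace Feasible

variable {m lam k n s : ℕ}

theorem exists_eq_mul_add_one (h : Feasible m lam k n) : ∃ s, 0 < s ∧ k = n * s + 1 := by
  obtain ⟨-, -, hk, hn, -, ⟨s, hs⟩, hquo⟩ := h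
  rw [hs, Nat.mul_div_cancel_left _ (by omega)] at hquo
  exact ⟨s, hquo, by omega⟩

theorem mul_succ_eq_two_mul_of_two (h : Feasible m lam (2 * s + 1) 2) :
    m * (s + 1) = 2 * lam := by
  have heq := h.2.2.2.2.1
  norm_num at heq
  linarith

end Feasible

namespace Basic

variable {m lam k n : ℕ}

theorem dvd_sq (h : Basic m lam k n) : m ∣ n ^ 2 :=
  Nat.Coprime.dvd_of_dvd_mul_left h.2 ⟨_, h.1.2.2.2.2.1.symm⟩

theorem odd_of_even (h : Basic m lam k n) (hm : Even m) : Odd lam :=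
  Nat.coprime_two_left.mp (Nat.Coprime.coprime_dvd_left hm.two_dvd h.2)

end Basic

theorem stmt5 (m lam k : ℕ) (hb : Basic m lam k 2) (hm : 1 < m) :
    m = 2 ∧ ∃ t : ℕ, 0 < t ∧ lam = 2 * t + 1 ∧ k = 4 * t + 1 := by
  obtain ⟨s, hs, rfl⟩ := hb.1.exists_eq_mul_add_one
  have heq := hb.1.mul_succ_eq_two_mul_of_two
  have hm4 : m ∣ 2 ^ 2 := hb.dvd_sq
  have hm24 : m = 2 ∨ m = 4 := by
    have : m ≤ 4 := Nat.le_of_dvd (by norm_num) hm4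
    interval_cases m <;> omega
  obtain ⟨u, rfl⟩ : Odd lam :=
    hb.odd_of_even (by rcases hm24 with rfl | rfl <;> decide)
  rcases hm24 with rfl | rfl
  · exact ⟨rfl, u, by omega, rfl, by omega⟩
  · omega
end

section
/- Let A be an OA_λ(k,n) (k ≥ 2, n ≥ 2, λ ≥ 1) containing a row 0 0 ⋯ 0 repeated m times, and let α be a positive integer. Then m·(k(k−1) − 2αk + α² + α) ≤ λ·(k(k−1) − 2αkn + (α²+α)n²), with equality if and only if every row other than the m repeated rows contains either α or α+1 occurrences of the symbol 0. -/
open Finset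

theorem Int.mul_sub_one_nonneg (y : ℤ) : 0 ≤ y * (y - 1) := by
  rcases le_or_gt y 0 with hy | hy <;> nlinarith

theorem Int.mul_sub_one_eq_zero_iff {y : ℤ} : y * (y - 1) = 0 ↔ y = 0 ∨ y = 1 := by
  rw [mul_eq_zero, sub_eq_zero]

section DoubleCounting

variable {ι κ σ : Type*} [Fintype ι] [Fintype κ] [DecidableEq σ] (A : ι → κ → σ) (x : σ)

theorem sum_card_filter_row_eq_sum_card_filter_col :
    ∑ i, #{c | A i c = x} = ∑ c, #{i | A i c = x} :=
  sum_card_bipartiteAbove_eq_sum_card_bipartiteBelow (fun i c => A i c = x)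

theorem sum_card_filter_row_sq :
    ∑ i, #{c | A i c = x} ^ 2 = ∑ c₁, ∑ c₂, #{i | A i c₁ = x ∧ A i c₂ = x} := by
  have hsq : ∀ i, #{c | A i c = x} ^ 2 = #{p : κ × κ | A i p.1 = x ∧ A i p.2 = x} := fun i => by
    rw [sq, ← card_product, ← filter_product, univ_product_univ]
  simp_rw [hsq, ← Fintype.sum_prod_type']
  exact sum_card_bipartiteAbove_eq_sum_card_bipartiteBelow
    (fun i (p : κ × κ) => A i p.1 = x ∧ A i p.2 = x)

end DoubleCounting

namespace IsOA

variable {lam k n : ℕ} {A : Fin (lam * n ^ 2) → Fin k → Fin n}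

theorem card_filter_col (hA : IsOA lam k n A) (hk : 1 < k) (c : Fin k) (x : Fin n) :
    #{i | A i c = x} = lam * n := by
  obtain ⟨c', hc'⟩ := Fintype.exists_ne_of_one_lt_card (by simpa using hk) c
  have hpart : #{i | A i c = x} = ∑ y : Fin n, #{i | A i c = x ∧ A i c' = y} := by
    rw [card_eq_sum_card_fiberwise (f := fun i => A i c') (t := univ) (fun _ _ => mem_univ _)]
    simp_rw [filter_filter]
  rw [hpart, sum_congr rfl fun y _ => hA c c' hc'.symm x y, sum_const, card_univ,
    Fintype.card_fin, smul_eq_mul, mul_comm]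

theorem sum_card_filter (hA : IsOA lam k n A) (hk : 1 < k) (x : Fin n) :
    ∑ i, #{c | A i c = x} = k * (lam * n) := by
  rw [sum_card_filter_row_eq_sum_card_filter_col,
    sum_congr rfl fun c _ => hA.card_filter_col hk c x, sum_const, card_univ, Fintype.card_fin,
    smul_eq_mul]

theorem sum_card_filter_sq (hA : IsOA lam k n A) (hk : 1 < k) (x : Fin n) :
    ∑ i, (#{c | A i c = x} : ℤ) ^ 2 = k * (lam * n) + k * (k - 1) * lam := by
  have hpair : ∀ c₁ c₂ : Fin k, (#{i | A i c₁ = x ∧ A i c₂ = x} : ℤ)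
      = lam + if c₁ = c₂ then (lam : ℤ) * n - lam else 0 := by
    intro c₁ c₂
    split_ifs with h
    · subst h
      simp only [and_self, hA.card_filter_col hk]
      push_cast; ring
    · simp [hA c₁ c₂ h x x]
  calc ∑ i, (#{c | A i c = x} : ℤ) ^ 2 = ((∑ i, #{c | A i c = x} ^ 2 : ℕ) : ℤ) := by push_cast; rfl
    _ = ∑ c₁, ∑ c₂, (#{i | A i c₁ = x ∧ A i c₂ = x} : ℤ) := by
      rw [sum_card_filter_row_sq]; push_cast; rfl
    _ = k * (lam * n) + k * (k - 1) * lam := by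
      simp_rw [hpair, sum_add_distrib, sum_ite_eq, mem_univ, if_true, sum_const, card_univ,
        Fintype.card_fin, nsmul_eq_mul]
      ring

theorem sum_mul_sub_one (hA : IsOA lam k n A) (hk : 1 < k) (x : Fin n) (α : ℤ) :
    ∑ i, ((#{c | A i c = x} : ℤ) - α) * ((#{c | A i c = x} : ℤ) - α - 1)
      = lam * (k * (k - 1) - 2 * α * k * n + (α ^ 2 + α) * n ^ 2) := by
  have h1 : ∑ i, (#{c | A i c = x} : ℤ) = k * (lam * n) := by
    exact_mod_cast hA.sum_card_filter hk x
  have hexpand : ∀ a : ℤ, (a - α) * (a - α - 1) = a ^ 2 - (2 * α + 1) * a + (α ^ 2 + α) :=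
    fun a => by ring
  simp_rw [hexpand, sum_add_distrib, sum_sub_distrib, ← mul_sum, h1,
    hA.sum_card_filter_sq hk x, sum_const, card_univ, Fintype.card_fin, nsmul_eq_mul]
  push_cast
  ring

end IsOA

theorem stmt13_general (k n lam m α : ℕ) [NeZero n] (hk : 2 ≤ k)
    (A : Fin (lam * n ^ 2) → Fin k → Fin n) (hA : IsOA lam k n A)
    (hm : (Finset.univ.filter (fun i => A i = fun _ => (0 : Fin n))).card = m) :
    (m : ℤ) * ((k : ℤ) * ((k : ℤ) - 1) - 2 * α * k + (α : ℤ) ^ 2 + α)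
      ≤ (lam : ℤ) * ((k : ℤ) * ((k : ℤ) - 1) - 2 * α * k * n + ((α : ℤ) ^ 2 + α) * n ^ 2) ∧
    ((m : ℤ) * ((k : ℤ) * ((k : ℤ) - 1) - 2 * α * k + (α : ℤ) ^ 2 + α)
        = (lam : ℤ) * ((k : ℤ) * ((k : ℤ) - 1) - 2 * α * k * n + ((α : ℤ) ^ 2 + α) * n ^ 2) ↔
      ∀ i, A i ≠ (fun _ => (0 : Fin n)) →
        (Finset.univ.filter (fun c => A i c = 0)).card = α ∨
        (Finset.univ.filter (fun c => A i c = 0)).card = α + 1) := by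
  set g : Fin (lam * n ^ 2) → ℤ := fun i =>
    ((#{c | A i c = 0} : ℤ) - α) * ((#{c | A i c = 0} : ℤ) - α - 1)
  have hzero : ∑ i with A i = (fun _ => 0), g i = m * ((k - α) * (k - α - 1)) := by
    rw [sum_congr rfl fun i hi => ?_, sum_const, hm, nsmul_eq_mul]
    simp [g, congrFun (mem_filter.mp hi).2]
  have htotal : m * ((k - α) * (k - α - 1)) + ∑ i with A i ≠ (fun _ => 0), g i
      = (lam : ℤ) * ((k : ℤ) * ((k : ℤ) - 1) - 2 * α * k * n + ((α : ℤ) ^ 2 + α) * n ^ 2) := by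
    rw [← hzero, sum_filter_add_sum_filter_not, hA.sum_mul_sub_one hk 0 α]
  rw [← htotal, show (m : ℤ) * ((k : ℤ) * ((k : ℤ) - 1) - 2 * α * k + (α : ℤ) ^ 2 + α)
    = m * ((k - α) * (k - α - 1)) by ring, le_add_iff_nonneg_right, left_eq_add,
    sum_eq_zero_iff_of_nonneg fun i _ => Int.mul_sub_one_nonneg _]
  refine ⟨sum_nonneg fun i _ => Int.mul_sub_one_nonneg _, ?_⟩
  simp only [mem_filter, mem_univ, true_and, Int.mul_sub_one_eq_zero_iff, sub_eq_iff_eq_add',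
    add_zero, ← Nat.cast_add_one, Nat.cast_inj]

theorem stmt13 (k n lam m α : ℕ) [NeZero n] (hk : 2 ≤ k) (hn : 2 ≤ n)
    (hlam : 1 ≤ lam) (hα : 0 < α)
    (A : Fin (lam * n ^ 2) → Fin k → Fin n) (hA : IsOA lam k n A)
    (hm : (Finset.univ.filter (fun i => A i = fun _ => (0 : Fin n))).card = m) :
    (m : ℤ) * ((k : ℤ) * ((k : ℤ) - 1) - 2 * α * k + (α : ℤ) ^ 2 + α)
      ≤ (lam : ℤ) * ((k : ℤ) * ((k : ℤ) - 1) - 2 * α * k * n + ((α : ℤ) ^ 2 + α) * n ^ 2) ∧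
    ((m : ℤ) * ((k : ℤ) * ((k : ℤ) - 1) - 2 * α * k + (α : ℤ) ^ 2 + α)
        = (lam : ℤ) * ((k : ℤ) * ((k : ℤ) - 1) - 2 * α * k * n + ((α : ℤ) ^ 2 + α) * n ^ 2) ↔
      ∀ i, A i ≠ (fun _ => (0 : Fin n)) →
        (Finset.univ.filter (fun c => A i c = 0)).card = α ∨
        (Finset.univ.filter (fun c => A i c = 0)).card = α + 1) :=
  stmt13_general k n lam m α hk A hA hm
end
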